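/- arXiv:2005.06818 — 2 statements merged into one kernel-verified Lean document; each statement's English description precedes it below -/
import Mathlib

section
/- Structural congruence on CCS processes is a congruence with respect to the LTS in the following strong sense (for the finite, recursion-free fragment): if P ≡ Q and P ⟶^α P' in LTS_CCS, then there exists Q' with Q ⟶^α Q' in LTS_CCS and P' ≡ Q'. -/
inductive Lab (N : Type) : Type
  | tau : Lab N
  | inp : N → Lab N
  | out : N → Lab N

def Lab.co {N : Type} : Lab N → Lab N
  | .tau => .tau
  | .inp a => .out a
  | .out a => .inp a

/-- `a ∉ α`: the label `α` is neither the name `a` nor its co-name. -/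
def Lab.notIn {N : Type} (a : N) : Lab N → Prop
  | .tau => True
  | .inp b => b ≠ a
  | .out b => b ≠ a

/-- Finite CCS processes: `P ::= 0 | λ.P | P|Q | P+Q | P\a`. -/
inductive Proc (N : Type) : Type
  | nil : Proc N
  | pre : Lab N → Proc N → Proc N
  | par : Proc N → Proc N → Proc N
  | sum : Proc N → Proc N → Proc N
  | res : N → Proc N → Proc N

/-- Free names. -/
def Proc.fn {N : Type} : Proc N → Set N
  | .nil => ∅
  | .pre l P => (match l with | .tau => ∅ | .inp a => {a} | .out a => {a}) ∪ P.fn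
  | .par P Q => P.fn ∪ Q.fn
  | .sum P Q => P.fn ∪ Q.fn
  | .res a P => P.fn \ {a}

/-- The labeled transition system LTS_CCS (finite fragment):
rules act., com₁, com₂, syn., sum., res. -/
inductive Step {N : Type} : Proc N → Lab N → Proc N → Prop
  | act (l : Lab N) (P : Proc N) : Step (.pre l P) l P
  | com1 {P P' Q : Proc N} {α : Lab N} :
      Step P α P' → Step (.par P Q) α (.par P' Q)
  | com2 {P Q Q' : Proc N} {α : Lab N} :
      Step Q α Q' → Step (.par P Q) α (.par P Q')
  | syn {P P' Q Q' : Proc N} {l : Lab N} :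
      l ≠ Lab.tau → Step P l P' → Step Q l.co Q' →
      Step (.par P Q) .tau (.par P' Q')
  | sum1 {P P' Q : Proc N} {α : Lab N} :
      Step P α P' → Step (.sum P Q) α P'
  | sum2 {P Q Q' : Proc N} {α : Lab N} :
      Step Q α Q' → Step (.sum P Q) α Q'
  | res {P P' : Proc N} {α : Lab N} {a : N} :
      Step P α P' → Lab.notIn a α → Step (.res a P) α (.res a P')

/-- Structural congruence on finite CCS processes. -/
inductive SC {N : Type} : Proc N → Proc N → Prop
  | refl (P : Proc N) : SC P P
  | symm {P Q : Proc N} : SC P Q → SC Q P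
  | trans {P Q V : Proc N} : SC P Q → SC Q V → SC P V
  | parComm (P Q : Proc N) : SC (.par P Q) (.par Q P)
  | parAssoc (P Q V : Proc N) : SC (.par (.par P Q) V) (.par P (.par Q V))
  | parNil (P : Proc N) : SC (.par P .nil) P
  | sumComm (P Q : Proc N) : SC (.sum P Q) (.sum Q P)
  | sumAssoc (P Q V : Proc N) : SC (.sum (.sum P Q) V) (.sum P (.sum Q V))
  | sumNil (P : Proc N) : SC (.sum P .nil) P
  | scope (a : N) (P Q : Proc N) : a ∉ Q.fn →
      SC (.par (.res a P) Q) (.res a (.par P Q))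
  | resEx (a b : N) (P : Proc N) : SC (.res a (.res b P)) (.res b (.res a P))
  | preCtx (l : Lab N) {P Q : Proc N} : SC P Q → SC (.pre l P) (.pre l Q)
  | parCtx {P P' Q Q' : Proc N} : SC P P' → SC Q Q' → SC (.par P Q) (.par P' Q')
  | sumCtx {P P' Q Q' : Proc N} : SC P P' → SC Q Q' → SC (.sum P Q) (.sum P' Q')
  | resCtx (a : N) {P Q : Proc N} : SC P Q → SC (.res a P) (.res a Q)

/-- `R` is a strong bisimulation for the transition relation `T`. -/
def IsBisim {N : Type} (T : Proc N → Lab N → Proc N → Prop)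
    (R : Proc N → Proc N → Prop) : Prop :=
  ∀ P Q, R P Q →
    (∀ α P', T P α P' → ∃ Q', T Q α Q' ∧ R P' Q') ∧
    (∀ α Q', T Q α Q' → ∃ P', T P α P' ∧ R P' Q')

/-- Strong bisimilarity: the union of all strong bisimulations. -/
def Bisim {N : Type} (T : Proc N → Lab N → Proc N → Prop) (P Q : Proc N) : Prop :=
  ∃ R, IsBisim T R ∧ R P Q


section CCSAux
variable {N : Type}

lemma co_co (l : Lab N) : l.co.co = l := by cases l <;> rfl

lemma co_ne_tau {l : Lab N} (h : l ≠ .tau) : l.co ≠ .tau := by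
  cases l <;> simp [Lab.co] at *

lemma co_eq_tau {l : Lab N} (h : l.co = .tau) : l = .tau := by
  cases l <;> simp [Lab.co] at *

/-- Names occurring in a label. -/
def labFn : Lab N → Set N
  | .tau => ∅
  | .inp a => {a}
  | .out a => {a}

lemma labFn_co (l : Lab N) : labFn l.co = labFn l := by cases l <;> rfl

lemma notIn_of_not_mem {a : N} {l : Lab N} (h : a ∉ labFn l) : l.notIn a := by
  cases l with
  | tau => trivial
  | inp b => intro e; exact h (by simp [labFn, e])
  | out b => intro e; exact h (by simp [labFn, e])

lemma fn_pre (l : Lab N) (P : Proc N) :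
    Proc.fn (.pre l P) = labFn l ∪ P.fn := by cases l <;> rfl

lemma step_fn {P P' : Proc N} {α : Lab N} (h : Step P α P') :
    labFn α ⊆ P.fn ∧ P'.fn ⊆ P.fn := by
  induction h with
  | act l P => rw [fn_pre]; exact ⟨Set.subset_union_left, Set.subset_union_right⟩
  | com1 h ih =>
      exact ⟨ih.1.trans Set.subset_union_left,
        Set.union_subset_union_left _ ih.2⟩
  | com2 h ih =>
      exact ⟨ih.1.trans Set.subset_union_right,
        Set.union_subset_union_right _ ih.2⟩
  | syn hne h1 h2 ih1 ih2 =>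
      refine ⟨by simp [labFn], ?_⟩
      exact Set.union_subset (ih1.2.trans Set.subset_union_left)
        (ih2.2.trans Set.subset_union_right)
  | sum1 h ih =>
      exact ⟨ih.1.trans Set.subset_union_left, ih.2.trans Set.subset_union_left⟩
  | sum2 h ih =>
      exact ⟨ih.1.trans Set.subset_union_right, ih.2.trans Set.subset_union_right⟩
  | res h hni ih =>
      refine ⟨fun x hx => ⟨ih.1 hx, ?_⟩, Set.diff_subset_diff_left ih.2⟩
      rename_i α a
      cases α with
      | tau => exact absurd hx (by simp [labFn])
      | inp b => simp [labFn] at hx; subst hx; exact hni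
      | out b => simp [labFn] at hx; subst hx; exact hni

lemma notIn_of_step {a : N} {Q Q' : Proc N} {α : Lab N}
    (h : Step Q α Q') (ha : a ∉ Q.fn) : α.notIn a ∧ a ∉ Q'.fn := by
  have hs := step_fn h
  exact ⟨notIn_of_not_mem (fun hm => ha (hs.1 hm)), fun hm => ha (hs.2 hm)⟩

lemma step_parComm {P Q R : Proc N} {α : Lab N}
    (h : Step (.par P Q) α R) : ∃ R', Step (.par Q P) α R' ∧ SC R R' := by
  cases h with
  | com1 h => exact ⟨_, .com2 h, .parComm _ _⟩
  | com2 h => exact ⟨_, .com1 h, .parComm _ _⟩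
  | syn hne hP hQ =>
      exact ⟨_, .syn (co_ne_tau hne) hQ (by rw [co_co]; exact hP), .parComm _ _⟩

lemma step_parAssoc1 {P Q V R : Proc N} {α : Lab N}
    (h : Step (.par (.par P Q) V) α R) :
    ∃ R', Step (.par P (.par Q V)) α R' ∧ SC R R' := by
  cases h with
  | com1 h =>
      cases h with
      | com1 h => exact ⟨_, .com1 h, .parAssoc _ _ _⟩
      | com2 h => exact ⟨_, .com2 (.com1 h), .parAssoc _ _ _⟩
      | syn hne hP hQ => exact ⟨_, .syn hne hP (.com1 hQ), .parAssoc _ _ _⟩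
  | com2 h => exact ⟨_, .com2 (.com2 h), .parAssoc _ _ _⟩
  | syn hne h1 h2 =>
      cases h1 with
      | com1 h => exact ⟨_, .syn hne h (.com2 h2), .parAssoc _ _ _⟩
      | com2 h => exact ⟨_, .com2 (.syn hne h h2), .parAssoc _ _ _⟩
      | syn hne' _ _ => exact absurd rfl hne

lemma step_parAssoc2 {P Q V R : Proc N} {α : Lab N}
    (h : Step (.par P (.par Q V)) α R) :
    ∃ R', Step (.par (.par P Q) V) α R' ∧ SC R' R := by
  cases h with
  | com1 h => exact ⟨_, .com1 (.com1 h), .parAssoc _ _ _⟩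
  | com2 h =>
      cases h with
      | com1 h => exact ⟨_, .com1 (.com2 h), .parAssoc _ _ _⟩
      | com2 h => exact ⟨_, .com2 h, .parAssoc _ _ _⟩
      | syn hne hQ hV => exact ⟨_, .syn hne (.com2 hQ) hV, .parAssoc _ _ _⟩
  | syn hne h1 h2 =>
      generalize hl : Lab.co _ = m at h2
      cases h2 with
      | com1 h => exact ⟨_, .com1 (.syn hne h1 (hl ▸ h)), .parAssoc _ _ _⟩
      | com2 h => exact ⟨_, .syn hne (.com1 h1) (hl ▸ h), .parAssoc _ _ _⟩
      | syn hne' _ _ => exact absurd (co_eq_tau hl) hne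

lemma step_scope1 {a : N} {P Q R : Proc N} {α : Lab N} (ha : a ∉ Q.fn)
    (h : Step (.par (.res a P) Q) α R) :
    ∃ R', Step (.res a (.par P Q)) α R' ∧ SC R R' := by
  cases h with
  | com1 h =>
      cases h with
      | res hP hni => exact ⟨_, .res (.com1 hP) hni, .scope a _ _ ha⟩
  | com2 h =>
      obtain ⟨hni, ha'⟩ := notIn_of_step h ha
      exact ⟨_, .res (.com2 h) hni, .scope a _ _ ha'⟩
  | syn hne h1 h2 =>
      cases h1 with
      | res hP hni =>
          obtain ⟨_, ha'⟩ := notIn_of_step h2 ha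
          exact ⟨_, .res (.syn hne hP h2) trivial, .scope a _ _ ha'⟩

lemma step_scope2 {a : N} {P Q R : Proc N} {α : Lab N} (ha : a ∉ Q.fn)
    (h : Step (.res a (.par P Q)) α R) :
    ∃ R', Step (.par (.res a P) Q) α R' ∧ SC R' R := by
  cases h with
  | res h hni =>
      cases h with
      | com1 hP => exact ⟨_, .com1 (.res hP hni), .scope a _ _ ha⟩
      | com2 hQ =>
          obtain ⟨_, ha'⟩ := notIn_of_step hQ ha
          exact ⟨_, .com2 hQ, .scope a _ _ ha'⟩
      | syn hne hP hQ =>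
          obtain ⟨hni', ha'⟩ := notIn_of_step hQ ha
          have hniP : Lab.notIn a _ := notIn_of_not_mem
            (fun hm => ha ((step_fn hQ).1 (by rwa [labFn_co])))
          exact ⟨_, .syn hne (.res hP hniP) hQ, .scope a _ _ ha'⟩

lemma step_resEx {a b : N} {P R : Proc N} {α : Lab N}
    (h : Step (.res a (.res b P)) α R) :
    ∃ R', Step (.res b (.res a P)) α R' ∧ SC R R' := by
  cases h with
  | res h hna =>
      cases h with
      | res h hnb => exact ⟨_, .res (.res h hna) hnb, .resEx _ _ _⟩

lemma sc_both {P Q : Proc N} (hPQ : SC P Q) :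
    (∀ α P', Step P α P' → ∃ Q', Step Q α Q' ∧ SC P' Q') ∧
    (∀ α Q', Step Q α Q' → ∃ P', Step P α P' ∧ SC P' Q') := by
  induction hPQ with
  | refl P => exact ⟨fun α P' h => ⟨P', h, .refl _⟩, fun α Q' h => ⟨Q', h, .refl _⟩⟩
  | symm h ih =>
      refine ⟨fun α P' hs => ?_, fun α Q' hs => ?_⟩
      · obtain ⟨R, h1, h2⟩ := ih.2 α P' hs; exact ⟨R, h1, h2.symm⟩
      · obtain ⟨R, h1, h2⟩ := ih.1 α Q' hs; exact ⟨R, h1, h2.symm⟩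
  | trans h1 h2 ih1 ih2 =>
      refine ⟨fun α P' hs => ?_, fun α Q' hs => ?_⟩
      · obtain ⟨R, hR, hsc⟩ := ih1.1 α P' hs
        obtain ⟨S, hS, hsc2⟩ := ih2.1 α R hR
        exact ⟨S, hS, hsc.trans hsc2⟩
      · obtain ⟨R, hR, hsc⟩ := ih2.2 α Q' hs
        obtain ⟨S, hS, hsc2⟩ := ih1.2 α R hR
        exact ⟨S, hS, hsc2.trans hsc⟩
  | parComm P Q =>
      refine ⟨fun α P' hs => step_parComm hs, fun α Q' hs => ?_⟩
      obtain ⟨R, h1, h2⟩ := step_parComm hs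
      exact ⟨R, h1, h2.symm⟩
  | parAssoc P Q V =>
      exact ⟨fun α P' hs => step_parAssoc1 hs, fun α Q' hs => step_parAssoc2 hs⟩
  | parNil P =>
      refine ⟨fun α P' hs => ?_, fun α Q' hs => ⟨_, .com1 hs, .parNil _⟩⟩
      cases hs with
      | com1 h => exact ⟨_, h, .parNil _⟩
      | com2 h => cases h
      | syn _ _ h => cases h
  | sumComm P Q =>
      have key : ∀ (P Q : Proc N) α R, Step (.sum P Q) α R →
          ∃ R', Step (.sum Q P) α R' ∧ SC R R' := by
        intro P Q α R hs
        cases hs with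
        | sum1 h => exact ⟨_, .sum2 h, .refl _⟩
        | sum2 h => exact ⟨_, .sum1 h, .refl _⟩
      refine ⟨fun α P' hs => key _ _ _ _ hs, fun α Q' hs => ?_⟩
      obtain ⟨R, h1, h2⟩ := key _ _ _ _ hs
      exact ⟨R, h1, h2.symm⟩
  | sumAssoc P Q V =>
      refine ⟨fun α P' hs => ?_, fun α Q' hs => ?_⟩
      · cases hs with
        | sum1 h =>
            cases h with
            | sum1 h => exact ⟨_, .sum1 h, .refl _⟩
            | sum2 h => exact ⟨_, .sum2 (.sum1 h), .refl _⟩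
        | sum2 h => exact ⟨_, .sum2 (.sum2 h), .refl _⟩
      · cases hs with
        | sum1 h => exact ⟨_, .sum1 (.sum1 h), .refl _⟩
        | sum2 h =>
            cases h with
            | sum1 h => exact ⟨_, .sum1 (.sum2 h), .refl _⟩
            | sum2 h => exact ⟨_, .sum2 h, .refl _⟩
  | sumNil P =>
      refine ⟨fun α P' hs => ?_, fun α Q' hs => ⟨_, .sum1 hs, .refl _⟩⟩
      cases hs with
      | sum1 h => exact ⟨_, h, .refl _⟩
      | sum2 h => cases h
  | scope a P Q ha =>
      exact ⟨fun α P' hs => step_scope1 ha hs, fun α Q' hs => step_scope2 ha hs⟩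
  | resEx a b P =>
      refine ⟨fun α P' hs => step_resEx hs, fun α Q' hs => ?_⟩
      obtain ⟨R, h1, h2⟩ := step_resEx hs
      exact ⟨R, h1, h2.symm⟩
  | preCtx l h ih =>
      refine ⟨fun α P' hs => ?_, fun α Q' hs => ?_⟩
      · cases hs with
        | act => exact ⟨_, .act l _, h⟩
      · cases hs with
        | act => exact ⟨_, .act l _, h⟩
  | parCtx h1 h2 ih1 ih2 =>
      refine ⟨fun α R hs => ?_, fun α R hs => ?_⟩
      · cases hs with
        | com1 h =>
            obtain ⟨S, s, sc⟩ := ih1.1 _ _ h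
            exact ⟨_, .com1 s, .parCtx sc h2⟩
        | com2 h =>
            obtain ⟨S, s, sc⟩ := ih2.1 _ _ h
            exact ⟨_, .com2 s, .parCtx h1 sc⟩
        | syn hne hP hQ =>
            obtain ⟨S1, s1, sc1⟩ := ih1.1 _ _ hP
            obtain ⟨S2, s2, sc2⟩ := ih2.1 _ _ hQ
            exact ⟨_, .syn hne s1 s2, .parCtx sc1 sc2⟩
      · cases hs with
        | com1 h =>
            obtain ⟨S, s, sc⟩ := ih1.2 _ _ h
            exact ⟨_, .com1 s, .parCtx sc h2⟩
        | com2 h =>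
            obtain ⟨S, s, sc⟩ := ih2.2 _ _ h
            exact ⟨_, .com2 s, .parCtx h1 sc⟩
        | syn hne hP hQ =>
            obtain ⟨S1, s1, sc1⟩ := ih1.2 _ _ hP
            obtain ⟨S2, s2, sc2⟩ := ih2.2 _ _ hQ
            exact ⟨_, .syn hne s1 s2, .parCtx sc1 sc2⟩
  | sumCtx h1 h2 ih1 ih2 =>
      refine ⟨fun α R hs => ?_, fun α R hs => ?_⟩
      · cases hs with
        | sum1 h =>
            obtain ⟨S, s, sc⟩ := ih1.1 _ _ h
            exact ⟨_, .sum1 s, sc⟩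
        | sum2 h =>
            obtain ⟨S, s, sc⟩ := ih2.1 _ _ h
            exact ⟨_, .sum2 s, sc⟩
      · cases hs with
        | sum1 h =>
            obtain ⟨S, s, sc⟩ := ih1.2 _ _ h
            exact ⟨_, .sum1 s, sc⟩
        | sum2 h =>
            obtain ⟨S, s, sc⟩ := ih2.2 _ _ h
            exact ⟨_, .sum2 s, sc⟩
  | resCtx a h ih =>
      refine ⟨fun α R hs => ?_, fun α R hs => ?_⟩
      · cases hs with
        | res h hni =>
            obtain ⟨S, s, sc⟩ := ih.1 _ _ h
            exact ⟨_, .res s hni, .resCtx a sc⟩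
      · cases hs with
        | res h hni =>
            obtain ⟨S, s, sc⟩ := ih.2 _ _ h
            exact ⟨_, .res s hni, .resCtx a sc⟩

end CCSAux

/-- structural congruence is a (strong) congruence for the LTS:
if `P ≡ Q` and `P ⟶^α P'`, then `Q ⟶^α Q'` for some `Q' ≡ P'`. -/
theorem sc_congruence_lts {N : Type} {P Q P' : Proc N} {α : Lab N}
    (hPQ : SC P Q) (h : Step P α P') :
    ∃ Q', Step Q α Q' ∧ SC P' Q' :=
  (sc_both hPQ).1 α P' h
end

section
/- Scope extrusion is sound for the LTS: for finite CCS processes P, Q with a ∉ fn(Q), if (P\a)|Q ⟶^α R in LTS_CCS then there exists R' with (P|Q)\a ⟶^α R' and R ≡ R' under structural congruence, and conversely. -/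
lemma step_fn_sub {N : Type} {P P' : Proc N} {α : Lab N}
    (h : Step P α P') : P'.fn ⊆ P.fn := by
  induction h with
  | act l P => exact fun x hx => Or.inr hx
  | com1 _ ih => exact fun x hx => hx.elim (fun h => Or.inl (ih h)) Or.inr
  | com2 _ ih => exact fun x hx => hx.elim Or.inl (fun h => Or.inr (ih h))
  | syn _ _ _ ih1 ih2 =>
      exact fun x hx => hx.elim (fun h => Or.inl (ih1 h)) (fun h => Or.inr (ih2 h))
  | sum1 _ ih => exact fun x hx => Or.inl (ih hx)
  | sum2 _ ih => exact fun x hx => Or.inr (ih hx)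
  | res _ _ ih => exact fun x hx => ⟨ih hx.1, hx.2⟩

lemma step_notIn {N : Type} {P P' : Proc N} {α : Lab N} {a : N}
    (h : Step P α P') (ha : a ∉ P.fn) : Lab.notIn a α := by
  induction h with
  | act l P =>
      cases l with
      | tau => trivial
      | inp b => exact fun hb => ha (Or.inl (hb ▸ rfl))
      | out b => exact fun hb => ha (Or.inl (hb ▸ rfl))
  | com1 _ ih => exact ih (fun h => ha (Or.inl h))
  | com2 _ ih => exact ih (fun h => ha (Or.inr h))
  | syn _ _ _ _ _ => trivial
  | sum1 _ ih => exact ih (fun h => ha (Or.inl h))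
  | sum2 _ ih => exact ih (fun h => ha (Or.inr h))
  | res hs hni ih =>
      rename_i P P' α b
      by_cases hab : a = b
      · subst hab; exact hni
      · exact ih (fun h => ha ⟨h, hab⟩)

lemma notIn_co {N : Type} {a : N} {l : Lab N} (h : Lab.notIn a l.co) :
    Lab.notIn a l := by
  cases l <;> exact h

/-- scope extrusion is sound for the LTS. -/
theorem scope_extrusion_sound {N : Type} {P Q : Proc N} {a : N}
    (ha : a ∉ Q.fn) :
    (∀ (α : Lab N) (R : Proc N), Step (.par (.res a P) Q) α R →
      ∃ R', Step (.res a (.par P Q)) α R' ∧ SC R R') ∧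
    (∀ (α : Lab N) (R' : Proc N), Step (.res a (.par P Q)) α R' →
      ∃ R, Step (.par (.res a P) Q) α R ∧ SC R R') := by
  constructor
  · intro α R h
    cases h with
    | com1 h =>
        cases h with
        | res hP hni =>
            rename_i P'
            exact ⟨.res a (.par P' Q), .res (.com1 hP) hni, .scope a P' Q ha⟩
    | com2 hQ =>
        rename_i Q'
        exact ⟨.res a (.par P Q'), .res (.com2 hQ) (step_notIn hQ ha),
          .scope a P Q' (fun h => ha (step_fn_sub hQ h))⟩
    | syn hne h1 h2 =>
        rename_i X Q' l
        cases h1 with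
        | res hP hni =>
            rename_i P'
            exact ⟨.res a (.par P' Q'), .res (.syn hne hP h2) trivial,
              .scope a P' Q' (fun h => ha (step_fn_sub h2 h))⟩
  · intro α R' h
    cases h with
    | res h hni =>
        cases h with
        | com1 hP =>
            rename_i P'
            exact ⟨.par (.res a P') Q, .com1 (.res hP hni), .scope a P' Q ha⟩
        | com2 hQ =>
            rename_i Q'
            exact ⟨.par (.res a P) Q', .com2 hQ,
              .scope a P Q' (fun h => ha (step_fn_sub hQ h))⟩
        | syn hne h1 h2 =>
            rename_i P' Q' l
            exact ⟨.par (.res a P') Q',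
              .syn hne (.res h1 (notIn_co (step_notIn h2 ha))) h2,
              .scope a P' Q' (fun h => ha (step_fn_sub h2 h))⟩
end
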